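/- Let $A: \prod_{\ell=1}^L L_2(\Omega_\ell,\gamma_\ell) \to L_2(\Omega_A)^G$ be the atmospheric tomography operator $(A\phi)_g(r) = \sum_{\ell=1}^L \phi_\ell(c_{\ell,g} r + \alpha_g h_\ell)$, where $c_{\ell,g}\in(0,1]$, $\alpha_g\in\mathbb{R}^2$, $h_\ell\ge 0$, and $\Omega_A(\alpha_g h_\ell) = \{r : (r-\alpha_g h_\ell)/c_{\ell,g} \in \Omega_A\} \subset \Omega_\ell$. Then the Hilbert-space adjoint of $A$ is given by $(A^*\varphi)_\ell(r) = \sum_{g=1}^G \frac{\gamma_\ell}{c_{\ell,g}^2}\,\varphi_g\!\left(\frac{r-\alpha_g h_\ell}{c_{\ell,g}}\right) I_{\Omega_A(\alpha_g h_\ell)}(r)$. -/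

import Mathlib

/-! Each summand of `A` composes `φ_ℓ` with the affine map `x ↦ c • x + b` (`c = c_{ℓ,g}`,
`b = h_ℓ α_g`), which maps `Ω_A` onto `Ω_A(α_g h_ℓ)` and pushes Lebesgue measure on `ℝ²`
forward to `c⁻²` times itself. Hence
`∫_{Ω_A} φ_ℓ(c x + b) ψ̄_g(x) dx = c⁻² ∫_{Ω_A(α_g h_ℓ)} φ_ℓ(y) ψ̄_g((y - b)/c) dy`,
and the factor `γ_ℓ` in the coefficient `γ_ℓ / c²` of `A*` is cancelled by the weight `1/γ_ℓ`
of the layer inner product. Exchanging the finite sums over `ℓ` and `g` gives the identity;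
by Cauchy–Schwarz every integrand is integrable, so the integrals split along the sums. -/

open MeasureTheory Measure Set Module ComplexConjugate

section AffineChangeOfVariables

variable {E F : Type*} [NormedAddCommGroup E] [NormedSpace ℝ E] [MeasurableSpace E] [BorelSpace E]
  [FiniteDimensional ℝ E] [NormedAddCommGroup F]
  (μ : Measure E) [μ.IsAddHaarMeasure] {k : ℝ} (b : E)

omit [MeasurableSpace E] [BorelSpace E] [FiniteDimensional ℝ E] in
theorem preimage_smul_add_setOf_inv_smul_sub_mem (hk : k ≠ 0) (s : Set E) :
    (fun x => k • x + b) ⁻¹' {y | k⁻¹ • (y - b) ∈ s} = s := by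
  ext x
  simp [inv_smul_smul₀ hk]

omit [FiniteDimensional ℝ E] in
theorem measurableEmbedding_smul_add (hk : k ≠ 0) :
    MeasurableEmbedding (fun x : E => k • x + b) :=
  ((Homeomorph.smulOfNeZero k hk).trans (Homeomorph.addRight b)).measurableEmbedding

theorem map_smul_add_addHaar (hk : k ≠ 0) :
    map (fun x : E => k • x + b) μ = ENNReal.ofReal |(k ^ finrank ℝ E)⁻¹| • μ := by
  change map ((· + b) ∘ (k • ·)) μ = _
  rw [← map_map (measurable_add_const b) (measurable_const_smul k), map_addHaar_smul μ hk,
    Measure.map_smul, map_add_right_eq_self]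

theorem setIntegral_preimage_smul_add [NormedSpace ℝ F] (hk : k ≠ 0) (f : E → F) (s : Set E) :
    ∫ x in (fun x => k • x + b) ⁻¹' s, f (k • x + b) ∂μ =
      |(k ^ finrank ℝ E)⁻¹| • ∫ y in s, f y ∂μ := by
  rw [← (measurableEmbedding_smul_add b hk).setIntegral_map, map_smul_add_addHaar μ b hk,
    Measure.restrict_smul, integral_smul_measure, ENNReal.toReal_ofReal (abs_nonneg _)]

theorem integrableOn_preimage_smul_add_iff (hk : k ≠ 0) {f : E → F} {s : Set E} :
    IntegrableOn (fun x => f (k • x + b)) ((fun x => k • x + b) ⁻¹' s) μ ↔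
      IntegrableOn f s μ := by
  rw [← Function.comp_def, ← (measurableEmbedding_smul_add b hk).integrableOn_map_iff,
    map_smul_add_addHaar μ b hk, IntegrableOn, Measure.restrict_smul,
    integrable_smul_measure (by simp [hk]) ENNReal.ofReal_ne_top, IntegrableOn]

theorem MeasureTheory.MemLp.comp_smul_add (hk : k ≠ 0) {p : ENNReal} {f : E → F} {s : Set E}
    (hf : MemLp f p (μ.restrict s)) :
    MemLp (fun x => f (k • x + b)) p (μ.restrict ((fun x => k • x + b) ⁻¹' s)) := by
  rw [← Function.comp_def, ← (measurableEmbedding_smul_add b hk).memLp_map_measure_iff,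
    ← (measurableEmbedding_smul_add b hk).restrict_map, map_smul_add_addHaar μ b hk,
    Measure.restrict_smul]
  exact hf.smul_measure ENNReal.ofReal_ne_top

theorem integrableOn_comp_smul_add_mul_conj (hk : k ≠ 0) {s t : Set E}
    (hst : (fun x => k • x + b) ⁻¹' t = s) {f g : E → ℂ} (hf : MemLp f 2 (μ.restrict t))
    (hg : MemLp g 2 (μ.restrict s)) :
    IntegrableOn (fun x => f (k • x + b) * conj (g x)) s μ := by
  subst hst
  exact (hf.comp_smul_add μ b hk).integrable_mul hg.star

theorem integrable_indicator_mul_conj_comp_inv_smul_sub (hk : k ≠ 0) {s t : Set E}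
    (hst : (fun x => k • x + b) ⁻¹' t = s) (ht : MeasurableSet t) {f g : E → ℂ}
    (hf : MemLp f 2 (μ.restrict t)) (hg : MemLp g 2 (μ.restrict s)) :
    Integrable (t.indicator fun y => f y * conj (g (k⁻¹ • (y - b)))) μ := by
  refine IntegrableOn.integrable_indicator ?_ ht
  rw [← integrableOn_preimage_smul_add_iff μ b hk]
  simpa only [add_sub_cancel_right, inv_smul_smul₀ hk, hst] using
    integrableOn_comp_smul_add_mul_conj μ b hk hst hf hg

theorem setIntegral_indicator_mul_conj_comp_inv_smul_sub (hk : k ≠ 0) {s t u : Set E}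
    (hst : (fun x => k • x + b) ⁻¹' t = s) (ht : MeasurableSet t) (htu : t ⊆ u) (f g : E → ℂ) :
    ∫ y in u, t.indicator (fun y => f y * conj (g (k⁻¹ • (y - b)))) y ∂μ =
      |k ^ finrank ℝ E| * ∫ x in s, f (k • x + b) * conj (g x) ∂μ := by
  have hchange :=
    setIntegral_preimage_smul_add μ b hk (fun y => f y * conj (g (k⁻¹ • (y - b)))) t
  simp only [add_sub_cancel_right, inv_smul_smul₀ hk, hst] at hchange
  rw [setIntegral_indicator ht, inter_eq_right.mpr htu, hchange, Complex.real_smul, ← mul_assoc,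
    ← Complex.ofReal_mul, abs_inv, mul_inv_cancel₀ (by positivity), Complex.ofReal_one, one_mul]

end AffineChangeOfVariables

theorem mul_conj_sum_ofReal_mul_indicator_one {ι X : Type*} (I : Finset ι) (f : X → ℂ)
    (w : ι → ℝ) (u : ι → X → ℂ) (D : ι → Set X) (x : X) :
    f x * conj (∑ i ∈ I, (w i : ℂ) * u i x * (D i).indicator (fun _ => 1) x) =
      ∑ i ∈ I, (w i : ℂ) * (D i).indicator (fun y => f y * conj (u i y)) x := by
  simp only [_root_.map_sum, Finset.mul_sum]
  refine Finset.sum_congr rfl fun i _ => ?_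
  by_cases hx : x ∈ D i
  · simp only [indicator_of_mem hx, map_mul, Complex.conj_ofReal, map_one]
    ring
  · simp [indicator_of_notMem hx]

theorem atmospheric_tomography_adjoint_general
    (L G : ℕ) (γ : Fin L → ℝ) (hγ : ∀ l, 0 < γ l)
    (c : Fin L → Fin G → ℝ) (hc : ∀ l g, 0 < c l g ∧ c l g ≤ 1)
    (α : Fin G → ℝ × ℝ) (h : Fin L → ℝ)
    (ΩA : Set (ℝ × ℝ)) (hΩA : MeasurableSet ΩA)
    -- the shifted/scaled aperture domains Ω_A(α_g h_ℓ)
    (DA : Fin L → Fin G → Set (ℝ × ℝ))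
    (hDA : ∀ l g, DA l g = {r : ℝ × ℝ | (c l g)⁻¹ • (r - h l • α g) ∈ ΩA})
    -- the layer domains Ω_ℓ
    (Ωl : Fin L → Set (ℝ × ℝ)) (hΩl : ∀ l, Ωl l = ⋃ g : Fin G, DA l g)
    -- the adjoint candidate A*ψ
    (Astar : (Fin G → ℝ × ℝ → ℂ) → Fin L → ℝ × ℝ → ℂ)
    (hAstar : ∀ (ψ : Fin G → ℝ × ℝ → ℂ) (l : Fin L) (r : ℝ × ℝ),
      Astar ψ l r = ∑ g : Fin G,
        ((γ l / (c l g) ^ 2 : ℝ) : ℂ) * ψ g ((c l g)⁻¹ • (r - h l • α g)) *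
          Set.indicator (DA l g) (fun _ => (1 : ℂ)) r) :
    ∀ (φ : Fin L → ℝ × ℝ → ℂ) (ψ : Fin G → ℝ × ℝ → ℂ),
      (∀ l, MemLp (φ l) 2 (volume.restrict (Ωl l))) →
      (∀ g, MemLp (ψ g) 2 (volume.restrict ΩA)) →
      -- ⟨Aφ, ψ⟩_{L₂(Ω_A)^G} = ⟨φ, A*ψ⟩_{∏ L₂(Ω_ℓ, γ_ℓ)}
      (∑ g : Fin G, ∫ r in ΩA,
          (∑ l : Fin L, φ l (c l g • r + h l • α g)) * (starRingEnd ℂ) (ψ g r)) =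
        ∑ l : Fin L, (1 / γ l : ℂ) *
          ∫ r in Ωl l, φ l r * (starRingEnd ℂ) (Astar ψ l r) := by
  intro φ ψ hφ hψ
  have hc₀ : ∀ l g, c l g ≠ 0 := fun l g => (hc l g).1.ne'
  have hpre : ∀ l g, (fun x => c l g • x + h l • α g) ⁻¹' DA l g = ΩA := fun l g =>
    hDA l g ▸ preimage_smul_add_setOf_inv_smul_sub_mem _ (hc₀ l g) ΩA
  have hDA_meas : ∀ l g, MeasurableSet (DA l g) := fun l g => by
    rw [hDA]
    exact (measurable_const_smul _).comp (measurable_sub_const _) hΩA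
  have hDA_sub : ∀ l g, DA l g ⊆ Ωl l := fun l g => hΩl l ▸ subset_iUnion (DA l) g
  have hφD : ∀ l g, MemLp (φ l) 2 (volume.restrict (DA l g)) := fun l g =>
    (hφ l).mono_measure (restrict_mono (hDA_sub l g) le_rfl)
  have hforward : ∀ g, ∫ r in ΩA, (∑ l, φ l (c l g • r + h l • α g)) * conj (ψ g r) =
      ∑ l, ∫ r in ΩA, φ l (c l g • r + h l • α g) * conj (ψ g r) := fun g => by
    simp_rw [Finset.sum_mul]
    exact integral_finsetSum _ fun l _ =>
      integrableOn_comp_smul_add_mul_conj _ _ (hc₀ l g) (hpre l g) (hφD l g) (hψ g)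
  have hadjoint : ∀ l, ∫ r in Ωl l, φ l r * conj (Astar ψ l r) =
      γ l * ∑ g, ∫ r in ΩA, φ l (c l g • r + h l • α g) * conj (ψ g r) := fun l => by
    simp_rw [hAstar, mul_conj_sum_ofReal_mul_indicator_one _ (φ l) (fun g => γ l / c l g ^ 2)
      (fun g y => ψ g ((c l g)⁻¹ • (y - h l • α g)))]
    rw [integral_finsetSum _ fun g _ => (integrable_indicator_mul_conj_comp_inv_smul_sub _ _
      (hc₀ l g) (hpre l g) (hDA_meas l g) (hφD l g) (hψ g)).integrableOn.const_mul _,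
      Finset.mul_sum]
    refine Finset.sum_congr rfl fun g _ => ?_
    rw [integral_const_mul, setIntegral_indicator_mul_conj_comp_inv_smul_sub _ _ (hc₀ l g)
      (hpre l g) (hDA_meas l g) (hDA_sub l g), abs_of_nonneg (pow_nonneg (hc l g).1.le _),
      ← mul_assoc, ← Complex.ofReal_mul]
    simp only [finrank_prod, finrank_self, Nat.reduceAdd,
      div_mul_cancel₀ _ (pow_ne_zero 2 (hc₀ l g))]
  simp_rw [hforward, hadjoint, Finset.sum_comm (γ := Fin G), ← mul_assoc, one_div,
    inv_mul_cancel₀ (Complex.ofReal_ne_zero.mpr (hγ _).ne'), one_mul]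

/-- the Hilbert-space adjoint of the atmospheric tomography operator
`(Aφ)_g(r) = ∑_ℓ φ_ℓ(c_{ℓg} r + α_g h_ℓ)` from `∏_ℓ L₂(Ω_ℓ, γ_ℓ)` to `L₂(Ω_A)^G` is
`(A*ψ)_ℓ(r) = ∑_g (γ_ℓ/c_{ℓg}²) ψ_g((r - α_g h_ℓ)/c_{ℓg}) I_{Ω_A(α_g h_ℓ)}(r)`,
expressed via the defining adjoint identity `⟨Aφ, ψ⟩ = ⟨φ, A*ψ⟩`. -/
theorem atmospheric_tomography_adjoint
    (L G : ℕ) (γ : Fin L → ℝ) (hγ : ∀ l, 0 < γ l)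
    (c : Fin L → Fin G → ℝ) (hc : ∀ l g, 0 < c l g ∧ c l g ≤ 1)
    (α : Fin G → ℝ × ℝ) (h : Fin L → ℝ) (hh : ∀ l, 0 ≤ h l)
    (ΩA : Set (ℝ × ℝ)) (hΩA : MeasurableSet ΩA)
    -- the shifted/scaled aperture domains Ω_A(α_g h_ℓ)
    (DA : Fin L → Fin G → Set (ℝ × ℝ))
    (hDA : ∀ l g, DA l g = {r : ℝ × ℝ | (c l g)⁻¹ • (r - h l • α g) ∈ ΩA})
    -- the layer domains Ω_ℓ
    (Ωl : Fin L → Set (ℝ × ℝ)) (hΩl : ∀ l, Ωl l = ⋃ g : Fin G, DA l g)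
    -- the adjoint candidate A*ψ
    (Astar : (Fin G → ℝ × ℝ → ℂ) → Fin L → ℝ × ℝ → ℂ)
    (hAstar : ∀ (ψ : Fin G → ℝ × ℝ → ℂ) (l : Fin L) (r : ℝ × ℝ),
      Astar ψ l r = ∑ g : Fin G,
        ((γ l / (c l g) ^ 2 : ℝ) : ℂ) * ψ g ((c l g)⁻¹ • (r - h l • α g)) *
          Set.indicator (DA l g) (fun _ => (1 : ℂ)) r) :
    ∀ (φ : Fin L → ℝ × ℝ → ℂ) (ψ : Fin G → ℝ × ℝ → ℂ),
      (∀ l, MemLp (φ l) 2 (volume.restrict (Ωl l))) →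
      (∀ g, MemLp (ψ g) 2 (volume.restrict ΩA)) →
      -- ⟨Aφ, ψ⟩_{L₂(Ω_A)^G} = ⟨φ, A*ψ⟩_{∏ L₂(Ω_ℓ, γ_ℓ)}
      (∑ g : Fin G, ∫ r in ΩA,
          (∑ l : Fin L, φ l (c l g • r + h l • α g)) * (starRingEnd ℂ) (ψ g r)) =
        ∑ l : Fin L, (1 / γ l : ℂ) *
          ∫ r in Ωl l, φ l r * (starRingEnd ℂ) (Astar ψ l r) :=
  atmospheric_tomography_adjoint_general L G γ hγ c hc α h ΩA hΩA DA hDA Ωl hΩl Astar hAstar
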